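/- arXiv:2603.16819 — 6 statements merged into one kernel-verified Lean document; each statement's English description precedes it below -/
import Mathlib

section
/- Let q be an integer with q ≥ 2, let W be a nontrivial complex Banach space, and let α : W → W be a continuous linear operator with operator norm ‖α‖ < 2√q. Then there exist continuous linear operators τ, σ : W → W such that: τ ∘ σ = id and σ ∘ τ = id (so τ is invertible with inverse σ); τ + q·σ = α; τ commutes with α; the operator τ − σ is bijective; and neither q nor −q is an eigenvalue of τ, i.e. τw = q·w implies w = 0 and τw = −q·w implies w = 0. -/
open Filter Topology

set_option maxHeartbeats 1000000

lemma exists_sqrt_one_sub {A : Type*} [NormedRing A] [NormedAlgebra ℂ A] [CompleteSpace A]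
    (u : A) (hu : ‖u‖ < 1) :
    ∃ s : A, s * s = 1 - u ∧ ∀ x : A, x * u = u * x → x * s = s * x := by
  set r : ℝ := ‖u‖ with hr
  have hr0 : 0 ≤ r := norm_nonneg u
  have hs0 : 0 < Real.sqrt (1 - r) := Real.sqrt_pos.2 (by linarith)
  have hs0sq : Real.sqrt (1 - r) ^ 2 = 1 - r := Real.sq_sqrt (by linarith)
  set ρ : ℝ := 1 - Real.sqrt (1 - r) with hρ
  have hρ0 : 0 ≤ ρ := by nlinarith
  have hρ1 : ρ < 1 := by nlinarith
  have hkey : r + ρ * ρ = 2 * ρ := by nlinarith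
  -- iteration
  set f : ℕ → A := fun n => Nat.rec 0 (fun _ w => (2⁻¹ : ℂ) • (u + w * w)) n with hf
  have hfs : ∀ n, f (n + 1) = (2⁻¹ : ℂ) • (u + f n * f n) := fun n => rfl
  have hf0 : f 0 = 0 := rfl
  have hhalf : ‖(2⁻¹ : ℂ)‖ = 2⁻¹ := by simp
  -- commutation
  have hc : ∀ n, ∀ x : A, x * u = u * x → x * f n = f n * x := by
    intro n
    induction n with
    | zero => intro x _; simp [hf0]
    | succ n ih =>
      intro x hx
      rw [hfs, mul_smul_comm, smul_mul_assoc]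
      congr 1
      rw [mul_add, add_mul, hx]
      congr 1
      rw [← mul_assoc, ih x hx, mul_assoc, ih x hx, mul_assoc]
  -- norm bound
  have hb : ∀ n, ‖f n‖ ≤ ρ := by
    intro n
    induction n with
    | zero => simpa [hf0] using hρ0
    | succ n ih =>
      rw [hfs, norm_smul, hhalf]
      have h1 : ‖u + f n * f n‖ ≤ r + ρ * ρ := by
        refine le_trans (norm_add_le _ _) ?_
        gcongr
        exact le_trans (norm_mul_le _ _) (by nlinarith [norm_nonneg (f n)])
      rw [hkey] at h1
      nlinarith
  -- contraction estimates
  have hd : ∀ n, ‖f (n + 2) - f (n + 1)‖ ≤ ρ * ‖f (n + 1) - f n‖ := by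
    intro n
    have hcomm : f n * f (n + 1) = f (n + 1) * f n := hc (n + 1) (f n) (hc n u rfl).symm
    have hfact : f (n + 2) - f (n + 1)
        = (2⁻¹ : ℂ) • ((f (n + 1) - f n) * (f (n + 1) + f n)) := by
      have e1 : f (n + 2) - f (n + 1)
          = (2⁻¹ : ℂ) • (f (n + 1) * f (n + 1) - f n * f n) := by
        rw [hfs (n + 1), hfs n, ← smul_sub]
        congr 1
        abel
      rw [e1]
      congr 1
      rw [sub_mul, mul_add, mul_add, hcomm]
      abel
    rw [hfact, norm_smul, hhalf]
    have h2 : ‖(f (n + 1) - f n) * (f (n + 1) + f n)‖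
        ≤ ‖f (n + 1) - f n‖ * (2 * ρ) := by
      refine le_trans (norm_mul_le _ _) ?_
      gcongr
      refine le_trans (norm_add_le _ _) ?_
      linarith [hb (n + 1), hb n]
    nlinarith [norm_nonneg (f (n + 1) - f n)]
  have hgeo : ∀ n, ‖f (n + 1) - f n‖ ≤ 1 * ρ ^ n := by
    intro n
    induction n with
    | zero =>
      simp only [pow_zero, mul_one]
      rw [hfs, hf0, mul_zero, add_zero, sub_zero, norm_smul, hhalf]
      nlinarith
    | succ n ih =>
      calc ‖f (n + 2) - f (n + 1)‖ ≤ ρ * ‖f (n + 1) - f n‖ := hd n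
        _ ≤ ρ * (1 * ρ ^ n) := by nlinarith
        _ = 1 * ρ ^ (n + 1) := by ring
  have hcauchy : CauchySeq f := by
    refine cauchySeq_of_le_geometric ρ 1 hρ1 (fun n => ?_)
    rw [dist_eq_norm, norm_sub_rev]
    exact hgeo n
  obtain ⟨w, hw⟩ := cauchySeq_tendsto_of_complete hcauchy
  have hfix : w = (2⁻¹ : ℂ) • (u + w * w) := by
    have h1 : Tendsto (fun n => f (n + 1)) atTop (𝓝 w) :=
      hw.comp (tendsto_add_atTop_nat 1)
    have h2 : Tendsto (fun n => (2⁻¹ : ℂ) • (u + f n * f n)) atTop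
        (𝓝 ((2⁻¹ : ℂ) • (u + w * w))) :=
      ((tendsto_const_nhds.add (hw.mul hw)).const_smul _)
    exact tendsto_nhds_unique h1 (by simpa only [← hfs] using h2)
  have hcw : ∀ x : A, x * u = u * x → x * w = w * x := by
    intro x hx
    have h1 : Tendsto (fun n => x * f n) atTop (𝓝 (x * w)) := hw.const_mul x
    have h2 : Tendsto (fun n => f n * x) atTop (𝓝 (w * x)) := hw.mul_const x
    exact tendsto_nhds_unique (by simpa only [fun n => hc n x hx] using h1) h2
  have h2w : (2 : ℂ) • w = u + w * w := by
    nth_rewrite 1 [hfix]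
    rw [smul_smul]
    norm_num
  have hww : w * w = (2 : ℂ) • w - u := by
    rw [eq_sub_iff_add_eq, h2w]; abel
  refine ⟨1 - w, ?_, fun x hx => ?_⟩
  · simp only [mul_sub, sub_mul, mul_one, one_mul, hww, two_smul]
    abel
  · rw [mul_sub, sub_mul, mul_one, one_mul, hcw x hx]

theorem stmt_5 (q : ℤ) (hq : 2 ≤ q)
    (W : Type*) [NormedAddCommGroup W] [NormedSpace ℂ W] [CompleteSpace W] [Nontrivial W]
    (α : W →L[ℂ] W) (hα : ‖α‖ < 2 * Real.sqrt q) :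
    ∃ τ σ : W →L[ℂ] W,
      τ ∘L σ = ContinuousLinearMap.id ℂ W ∧
      σ ∘L τ = ContinuousLinearMap.id ℂ W ∧
      τ + (q : ℂ) • σ = α ∧
      τ ∘L α = α ∘L τ ∧
      Function.Bijective (τ - σ) ∧
      (∀ w : W, τ w = (q : ℂ) • w → w = 0) ∧
      (∀ w : W, τ w = (-q : ℂ) • w → w = 0) := by
  have hq2 : (2 : ℝ) ≤ (q : ℝ) := by exact_mod_cast hq
  have hq0 : (0 : ℝ) < (q : ℝ) := by linarith
  have hsq : Real.sqrt (q : ℝ) ^ 2 = (q : ℝ) := Real.sq_sqrt hq0.le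
  have hα0 : 0 ≤ ‖α‖ := norm_nonneg α
  have h4q : ‖α‖ ^ 2 < 4 * (q : ℝ) := by nlinarith [Real.sqrt_nonneg (q : ℝ)]
  have hqc : (q : ℂ) ≠ 0 := by
    exact_mod_cast (show (q : ℂ) ≠ 0 by exact_mod_cast (by omega : q ≠ 0))
  set u : W →L[ℂ] W := (4 * (q : ℂ))⁻¹ • (α * α) with hu_def
  have h4qc : (4 * (q : ℂ)) = ((4 * (q : ℝ) : ℝ) : ℂ) := by push_cast; ring
  have hu : ‖u‖ < 1 := by
    have he : ‖u‖ ≤ ‖(4 * (q : ℂ))⁻¹‖ * ‖α * α‖ := by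
      rw [hu_def]; exact ContinuousLinearMap.opNorm_smul_le _ _
    have hn : ‖(4 * (q : ℂ))⁻¹‖ = (4 * (q : ℝ))⁻¹ := by
      rw [norm_inv, h4qc, Complex.norm_real, Real.norm_eq_abs,
        abs_of_pos (by linarith : (0 : ℝ) < 4 * (q : ℝ))]
    have h1 : ‖α * α‖ ≤ ‖α‖ ^ 2 := by
      simpa [sq] using norm_mul_le α α
    rw [hn] at he
    have h2 : (4 * (q : ℝ))⁻¹ * ‖α * α‖ < 1 := by
      rw [inv_mul_lt_iff₀ (by linarith : (0 : ℝ) < 4 * (q : ℝ)), mul_one]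
      linarith
    linarith
  obtain ⟨s, hs2, hsc⟩ := exists_sqrt_one_sub u hu
  have hαu : α * u = u * α := by
    rw [hu_def, mul_smul_comm, smul_mul_assoc, mul_assoc]
  have hαs : α * s = s * α := hsc α hαu
  set c : ℂ := Complex.I * ((Real.sqrt (q : ℝ) : ℝ) : ℂ) with hc_def
  have hc2 : c * c = -(q : ℂ) := by
    rw [hc_def]
    have : ((Real.sqrt (q : ℝ) : ℝ) : ℂ) * ((Real.sqrt (q : ℝ) : ℝ) : ℂ) = ((q : ℝ) : ℂ) := by
      rw [← Complex.ofReal_mul, Real.mul_self_sqrt hq0.le]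
    calc Complex.I * _ * (Complex.I * _)
        = Complex.I * Complex.I * (((Real.sqrt (q : ℝ) : ℝ) : ℂ) * ((Real.sqrt (q : ℝ) : ℝ) : ℂ)) := by ring
      _ = -(q : ℂ) := by rw [Complex.I_mul_I, this]; push_cast; ring
  set β : W →L[ℂ] W := c • s with hβ_def
  have hβα : α * β = β * α := by
    rw [hβ_def, mul_smul_comm, smul_mul_assoc, hαs]
  have hqu : (q : ℂ) • u = (4⁻¹ : ℂ) • (α * α) := by
    rw [hu_def, smul_smul]
    congr 1
    field_simp
  have hβ2 : β * β = (4⁻¹ : ℂ) • (α * α) - (q : ℂ) • (1 : W →L[ℂ] W) := by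
    rw [hβ_def, smul_mul_smul_comm, hs2, hc2, ← hqu]
    rw [smul_sub, neg_smul, neg_smul, smul_smul]
    module
  set τ : W →L[ℂ] W := (2⁻¹ : ℂ) • α + β with hτ_def
  set σ : W →L[ℂ] W := (q : ℂ)⁻¹ • ((2⁻¹ : ℂ) • α - β) with hσ_def
  have key : ∀ (a b : W →L[ℂ] W), a = (2⁻¹ : ℂ) • α + β → b = (2⁻¹ : ℂ) • α - β →
      a * b = (q : ℂ) • 1 := by
    intro a b ha hb
    rw [ha, hb, add_mul, mul_sub, mul_sub]
    simp only [smul_mul_assoc, mul_smul_comm, smul_smul]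
    rw [← hβα, hβ2]
    module
  have hτσ : τ * σ = 1 := by
    rw [hσ_def, mul_smul_comm, key τ ((2⁻¹ : ℂ) • α - β) hτ_def rfl, smul_smul,
      inv_mul_cancel₀ hqc, one_smul]
  have hστ : σ * τ = 1 := by
    have key2 : ((2⁻¹ : ℂ) • α - β) * τ = (q : ℂ) • 1 := by
      rw [hτ_def, sub_mul, mul_add, mul_add]
      simp only [smul_mul_assoc, mul_smul_comm, smul_smul]
      rw [← hβα, hβ2]
      module
    rw [hσ_def, smul_mul_assoc, key2, smul_smul, inv_mul_cancel₀ hqc, one_smul]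
  have hsum : τ + (q : ℂ) • σ = α := by
    rw [hσ_def, smul_smul, mul_inv_cancel₀ hqc, one_smul, hτ_def]
    module
  have hτα : τ * α = α * τ := by
    rw [hτ_def, add_mul, mul_add, smul_mul_assoc, mul_smul_comm, hβα]
  have hτ2 : τ * τ = α * τ - (q : ℂ) • 1 := by
    have h := congrArg (fun g : W →L[ℂ] W => g * τ) hsum
    simp only [add_mul, smul_mul_assoc, hστ] at h
    rw [eq_sub_iff_add_eq, h]
  -- σ in terms of α and τ
  have hσ' : σ = (q : ℂ)⁻¹ • (α - τ) := by
    rw [hσ_def, hτ_def]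
    congr 1
    module
  -- the unit D
  set D : W →L[ℂ] W := ((q : ℂ) + 1) ^ 2 • (1 : W →L[ℂ] W) - α * α with hD_def
  have hq1c : ((q : ℂ) + 1) ≠ 0 := by
    have h : ((q : ℂ) + 1) = ((q + 1 : ℤ) : ℂ) := by push_cast; ring
    rw [h, Int.cast_ne_zero]; omega
  have hq1sq : (((q : ℂ) + 1) ^ 2) ≠ 0 := pow_ne_zero _ hq1c
  have hq1r : ((q : ℂ) + 1) ^ 2 = ((((q : ℝ) + 1) ^ 2 : ℝ) : ℂ) := by push_cast; ring
  have h2sq : 2 * Real.sqrt (q : ℝ) ≤ (q : ℝ) + 1 := by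
    nlinarith [sq_nonneg (Real.sqrt (q : ℝ) - 1), hsq]
  have hαlt : ‖α‖ < (q : ℝ) + 1 := lt_of_lt_of_le hα h2sq
  have hv : ‖(((q : ℂ) + 1) ^ 2)⁻¹ • (α * α)‖ < 1 := by
    have he : ‖(((q : ℂ) + 1) ^ 2)⁻¹ • (α * α)‖ ≤ ‖(((q : ℂ) + 1) ^ 2)⁻¹‖ * ‖α * α‖ :=
      ContinuousLinearMap.opNorm_smul_le _ _
    have hn : ‖(((q : ℂ) + 1) ^ 2)⁻¹‖ = (((q : ℝ) + 1) ^ 2)⁻¹ := by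
      rw [norm_inv, hq1r, Complex.norm_real, Real.norm_eq_abs,
        abs_of_pos (by nlinarith : (0 : ℝ) < ((q : ℝ) + 1) ^ 2)]
    have h1 : ‖α * α‖ ≤ ‖α‖ ^ 2 := by simpa [sq] using norm_mul_le α α
    rw [hn] at he
    have h2 : (((q : ℝ) + 1) ^ 2)⁻¹ * ‖α * α‖ < 1 := by
      rw [inv_mul_lt_iff₀ (by nlinarith : (0 : ℝ) < ((q : ℝ) + 1) ^ 2), mul_one]
      nlinarith
    linarith
  have hDunit : IsUnit D := by
    have hD2 : D = (((q : ℂ) + 1) ^ 2) •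
        ((1 : W →L[ℂ] W) - (((q : ℂ) + 1) ^ 2)⁻¹ • (α * α)) := by
      rw [hD_def, smul_sub, smul_smul, mul_inv_cancel₀ hq1sq, one_smul]
    have h1 : IsUnit ((1 : W →L[ℂ] W) - (((q : ℂ) + 1) ^ 2)⁻¹ • (α * α)) :=
      (Units.oneSub _ hv).isUnit
    have h2 : IsUnit ((((q : ℂ) + 1) ^ 2) • (1 : W →L[ℂ] W)) := by
      refine ⟨⟨(((q : ℂ) + 1) ^ 2) • (1 : W →L[ℂ] W),
        ((((q : ℂ) + 1) ^ 2)⁻¹) • (1 : W →L[ℂ] W), ?_, ?_⟩, rfl⟩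
      · rw [smul_mul_assoc, one_mul, smul_smul, mul_inv_cancel₀ hq1sq, one_smul]
      · rw [smul_mul_assoc, one_mul, smul_smul, inv_mul_cancel₀ hq1sq, one_smul]
    have h3 : (((q : ℂ) + 1) ^ 2) •
        ((1 : W →L[ℂ] W) - (((q : ℂ) + 1) ^ 2)⁻¹ • (α * α))
        = ((((q : ℂ) + 1) ^ 2) • (1 : W →L[ℂ] W)) *
          ((1 : W →L[ℂ] W) - (((q : ℂ) + 1) ^ 2)⁻¹ • (α * α)) := by
      rw [smul_mul_assoc, one_mul]
    rw [hD2, h3]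
    exact h2.mul h1
  obtain ⟨dU, hdU⟩ := hDunit
  set G : W →L[ℂ] W := ((q : ℂ) + 1) • τ - α with hG_def
  set C : W →L[ℂ] W := (q : ℂ) • α - ((q : ℂ) + 1) • τ with hC_def
  have hGC : G * C = (q : ℂ) • D := by
    rw [hG_def, hC_def, hD_def]
    simp only [sub_mul, mul_sub, smul_mul_assoc, mul_smul_comm, smul_smul]
    rw [hτα, hτ2]
    module
  have hCG : C * G = (q : ℂ) • D := by
    rw [hG_def, hC_def, hD_def]
    simp only [sub_mul, mul_sub, smul_mul_assoc, mul_smul_comm, smul_smul]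
    rw [hτα, hτ2]
    module
  have hE : τ - σ = (q : ℂ)⁻¹ • G := by
    rw [hσ', hG_def]
    match_scalars
    · field_simp
      ring
    · field_simp
      ring
  have hrinv : (τ - σ) * (C * ↑dU⁻¹) = 1 := by
    rw [hE, smul_mul_assoc, ← mul_assoc, hGC, smul_mul_assoc, smul_smul,
      inv_mul_cancel₀ hqc, one_smul, ← hdU, dU.mul_inv]
  have hlinv : ((↑dU⁻¹ * C : W →L[ℂ] W)) * (τ - σ) = 1 := by
    rw [hE, mul_smul_comm, mul_assoc, hCG, mul_smul_comm, smul_smul,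
      inv_mul_cancel₀ hqc, one_smul, ← hdU, dU.inv_mul]
  have heq : (↑dU⁻¹ * C : W →L[ℂ] W) = C * ↑dU⁻¹ := left_inv_eq_right_inv hlinv hrinv
  have hbij : Function.Bijective (τ - σ) := by
    refine Function.bijective_iff_has_inverse.2 ⟨(↑dU⁻¹ * C : W →L[ℂ] W), fun x => ?_, fun x => ?_⟩
    · have h := congrArg (fun g : W →L[ℂ] W => g x) hlinv
      simpa [ContinuousLinearMap.mul_apply] using h
    · have h' : (τ - σ) * (↑dU⁻¹ * C : W →L[ℂ] W) = 1 := by rw [heq]; exact hrinv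
      have h := congrArg (fun g : W →L[ℂ] W => g x) h'
      simpa [ContinuousLinearMap.mul_apply] using h
  have happ : ∀ w : W, σ (τ w) = w := by
    intro w
    have h := congrArg (fun g : W →L[ℂ] W => g w) hστ
    simpa [ContinuousLinearMap.mul_apply] using h
  have hsumapp : ∀ w : W, τ w + (q : ℂ) • σ w = α w := by
    intro w
    have h := congrArg (fun g : W →L[ℂ] W => g w) hsum
    simpa using h
  refine ⟨τ, σ, hτσ, hστ, hsum, hτα, hbij, fun w hw => ?_, fun w hw => ?_⟩
  · -- τ w = q • w → w = 0
    have h1 : (q : ℂ) • σ w = w := by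
      have := happ w
      rwa [hw, map_smul] at this
    have h3 : α w = ((q : ℂ) + 1) • w := by
      rw [← hsumapp w, hw, h1, add_smul, one_smul]
    have h4 : ‖α w‖ ≤ ‖α‖ * ‖w‖ := α.le_opNorm w
    have h5 : ‖((q : ℂ) + 1) • w‖ = ((q : ℝ) + 1) * ‖w‖ := by
      rw [norm_smul]
      congr 1
      have h : ((q : ℂ) + 1) = ((((q : ℝ) + 1) : ℝ) : ℂ) := by push_cast; ring
      rw [h, Complex.norm_real, Real.norm_eq_abs, abs_of_pos (by linarith)]
    rw [h3, h5] at h4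
    by_contra hne
    have hwpos : 0 < ‖w‖ := norm_pos_iff.2 hne
    nlinarith
  · -- τ w = -q • w → w = 0
    have hqneg : (-(q : ℂ)) ≠ 0 := neg_ne_zero.2 hqc
    have hw' : τ w = (-(q : ℂ)) • w := by rw [hw]
    have h1 : (-(q : ℂ)) • σ w = w := by
      have := happ w
      rwa [hw', map_smul] at this
    have h3 : α w = (-((q : ℂ) + 1)) • w := by
      rw [← hsumapp w, hw']
      have h2 : (q : ℂ) • σ w = -w := by
        have h := congrArg (fun z : W => -z) h1
        simpa [neg_smul] using h
      rw [h2]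
      module
    have h4 : ‖α w‖ ≤ ‖α‖ * ‖w‖ := α.le_opNorm w
    have h5 : ‖(-((q : ℂ) + 1)) • w‖ = ((q : ℝ) + 1) * ‖w‖ := by
      rw [norm_smul, norm_neg]
      congr 1
      have h : ((q : ℂ) + 1) = ((((q : ℝ) + 1) : ℝ) : ℂ) := by push_cast; ring
      rw [h, Complex.norm_real, Real.norm_eq_abs, abs_of_pos (by linarith)]
    rw [h3, h5] at h4
    by_contra hne
    have hwpos : 0 < ‖w‖ := norm_pos_iff.2 hne
    nlinarith
end

section
/- Let G be a topological group whose identity element has a neighbourhood basis consisting of compact open subgroups, let V be a complex Banach space, and let π : G →* (V →L[ℂ] V) be a monoid homomorphism such that for every v ∈ V the orbit map g ↦ π(g)v is continuous. Let V₀ ⊆ V be a closed linear subspace with V₀ ≠ {0} that is G-invariant (π(g)v ∈ V₀ for all g ∈ G, v ∈ V₀). Then there exist a compact open subgroup U ≤ G and a nonzero vector u ∈ V₀ with π(k)u = u for all k ∈ U. -/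
/-!
Pick a nonzero `v ∈ V₀` and a compact open subgroup `U` on which the orbit map stays within
`‖v‖ / 2` of `v`. Averaging the orbit of `v` over the normalized Haar measure of `U` gives a
`U`-fixed vector which lies in the closed convex set `V₀ ∩ closedBall v (‖v‖ / 2)`, hence is
nonzero.
-/

open MeasureTheory Metric

section Averaging

variable {K 𝕜 V : Type*} [Group K] [TopologicalSpace K] [CompactSpace K] [RCLike 𝕜]
  [NormedAddCommGroup V] [NormedSpace 𝕜 V] [NormedSpace ℝ V] [CompleteSpace V]
  (ρ : K →* (V →L[𝕜] V)) {v : V}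

theorem map_integral_orbit_eq [ContinuousMul K] [MeasurableSpace K] [BorelSpace K]
    (μ : Measure K) [IsProbabilityMeasure μ] [μ.IsMulLeftInvariant]
    (hv : Continuous fun k => ρ k v) (k : K) :
    ρ k (∫ j, ρ j v ∂μ) = ∫ j, ρ j v ∂μ := by
  have hint : Integrable (fun j => ρ j v) μ :=
    hv.integrable_of_hasCompactSupport (HasCompactSupport.of_compactSpace _)
  rw [← (ρ k).integral_comp_comm hint]
  simpa only [map_mul, mul_apply_eq_comp]
    using integral_mul_left_eq_self (fun j => ρ j v) k

theorem exists_fixed_mem_of_forall_orbit_mem [IsTopologicalGroup K]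
    (hv : Continuous fun k => ρ k v) {S : Set V} (hS : Convex ℝ S) (hSc : IsClosed S)
    (horbit : ∀ k, ρ k v ∈ S) :
    ∃ u ∈ S, ∀ k, ρ k u = u := by
  borelize K
  let μ : Measure K := Measure.haarMeasure ⊤
  have : IsProbabilityMeasure μ := ⟨Measure.haarMeasure_self⟩
  exact ⟨∫ j, ρ j v ∂μ,
    hS.integral_mem hSc (ae_of_all _ horbit)
      (hv.integrable_of_hasCompactSupport (HasCompactSupport.of_compactSpace _)),
    map_integral_orbit_eq ρ μ hv⟩

end Averaging

theorem stmt_8 (G : Type*) [Group G] [TopologicalSpace G] [IsTopologicalGroup G]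
    (hbasis : ∀ U ∈ nhds (1 : G), ∃ H : Subgroup G,
      IsCompact (H : Set G) ∧ IsOpen (H : Set G) ∧ (H : Set G) ⊆ U)
    (V : Type*) [NormedAddCommGroup V] [NormedSpace ℂ V] [CompleteSpace V]
    (π : G →* (V →L[ℂ] V))
    (hcont : ∀ v : V, Continuous fun g : G => π g v)
    (V₀ : Submodule ℂ V) (hclosed : IsClosed (V₀ : Set V)) (hne : V₀ ≠ ⊥)
    (hinv : ∀ g : G, ∀ v ∈ V₀, π g v ∈ V₀) :
    ∃ U : Subgroup G, IsCompact (U : Set G) ∧ IsOpen (U : Set G) ∧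
      ∃ u ∈ V₀, u ≠ 0 ∧ ∀ k ∈ U, π k u = u := by
  obtain ⟨v, hvV₀, hv⟩ := (Submodule.ne_bot_iff V₀).mp hne
  have hball : (fun g => π g v) ⁻¹' ball v (‖v‖ / 2) ∈ nhds (1 : G) :=
    (hcont v).continuousAt.preimage_mem_nhds <| by
      simpa using ball_mem_nhds v (half_pos (norm_pos_iff.mpr hv))
  obtain ⟨H, hHc, hHo, hHball⟩ := hbasis _ hball
  have : CompactSpace H := isCompact_iff_compactSpace.mp hHc
  obtain ⟨u, ⟨huV₀, huv⟩, hfix⟩ := exists_fixed_mem_of_forall_orbit_mem (π.comp H.subtype)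
    ((hcont v).comp continuous_subtype_val)
    ((V₀.restrictScalars ℝ).convex.inter (convex_closedBall v _))
    (hclosed.inter isClosed_closedBall)
    (fun k => ⟨hinv k v hvV₀, ball_subset_closedBall (hHball k.2)⟩)
  refine ⟨H, hHc, hHo, u, huV₀, ?_, fun k hk => hfix ⟨k, hk⟩⟩
  rintro rfl
  have : ‖v‖ ≤ ‖v‖ / 2 := by simpa [dist_comm] using huv
  linarith [norm_pos_iff.mpr hv]
end

section
/- Let G be a countable group, let V be an infinite-dimensional complex Banach space, and let ρ : G →* (V →ₗ[ℂ] V) be a monoid homomorphism into the linear endomorphisms of V (a linear representation, not assumed continuous). Then there exists a (not necessarily closed) linear subspace p ⊆ V that is G-invariant (ρ(g)v ∈ p for all g ∈ G, v ∈ p) with p ≠ {0} and p ≠ V. In other words, no linear representation of a countable group on an infinite-dimensional Banach space is algebraically irreducible. -/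
/-!
The cyclic subspace spanned by the orbit `ρ(G) v` of a nonzero vector is invariant and nonzero.
It is countably spanned, and a Banach space is never the span of a countable set unless it is
finite-dimensional: it would then be the countable union of the closed finite-dimensional spans
of finite subsets, one of which has nonempty interior by Baire's theorem and is therefore
everything.
-/

open Set Submodule

theorem FiniteDimensional.of_countable_of_span_eq_top {𝕜 V : Type*} [NontriviallyNormedField 𝕜]
    [CompleteSpace 𝕜] [NormedAddCommGroup V] [NormedSpace 𝕜 V] [CompleteSpace V]
    {s : Set V} (hs : s.Countable) (hspan : span 𝕜 s = ⊤) : FiniteDimensional 𝕜 V := by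
  have : Countable {t : Set V // t.Finite ∧ t ⊆ s} := (countable_ofPred_finite_subset hs).to_subtype
  have hcover : ⋃ t : {t : Set V // t.Finite ∧ t ⊆ s}, (span 𝕜 t.1 : Set V) = univ := by
    refine eq_univ_of_forall fun x => mem_iUnion.2 ?_
    obtain ⟨t, hts, hxt⟩ := mem_span_finite_of_mem_span (hspan ▸ mem_top : x ∈ span 𝕜 s)
    exact ⟨⟨t, t.finite_toSet, hts⟩, hxt⟩
  have hclosed (t : {t : Set V // t.Finite ∧ t ⊆ s}) : IsClosed (span 𝕜 t.1 : Set V) :=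
    have := FiniteDimensional.span_of_finite 𝕜 t.2.1
    (span 𝕜 t.1).closed_of_finiteDimensional
  obtain ⟨t, ht⟩ := nonempty_interior_of_iUnion_of_closed hclosed hcover
  refine Module.finite_def.2 ?_
  rw [← (span 𝕜 t.1).eq_top_of_nonempty_interior' ht]
  exact fg_def.2 ⟨t.1, t.2.1, rfl⟩

theorem span_range_apply_mapsTo {G k V : Type*} [Monoid G] [Semiring k] [AddCommMonoid V]
    [Module k V] (ρ : G →* V →ₗ[k] V) (v : V) (g : G) :
    MapsTo (ρ g) (span k (range fun h => ρ h v)) (span k (range fun h => ρ h v)) := by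
  show span k _ ≤ (span k _).comap (ρ g)
  rw [span_le]
  rintro _ ⟨h, rfl⟩
  exact subset_span ⟨g * h, by simp⟩

theorem stmt_9 (G : Type*) [Group G] [Countable G]
    (V : Type*) [NormedAddCommGroup V] [NormedSpace ℂ V] [CompleteSpace V]
    (hinf : ¬ FiniteDimensional ℂ V)
    (ρ : G →* (V →ₗ[ℂ] V)) :
    ∃ p : Submodule ℂ V, (∀ g : G, ∀ v ∈ p, ρ g v ∈ p) ∧ p ≠ ⊥ ∧ p ≠ ⊤ := by
  have : Nontrivial V := by
    by_contra h
    have := not_nontrivial_iff_subsingleton.mp h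
    exact hinf inferInstance
  obtain ⟨v, hv⟩ := exists_ne (0 : V)
  refine ⟨span ℂ (range fun g => ρ g v), fun g => span_range_apply_mapsTo ρ v g, ?_, ?_⟩
  · exact span_eq_bot.not.2 fun h => hv (by simpa using h v ⟨1, by simp⟩)
  · exact fun htop => hinf (.of_countable_of_span_eq_top (countable_range _) htop)
end

section
/- Let T be a tree (a connected acyclic simple graph) on a vertex set V with graph distance d, and let z : ℕ → V be a geodesic ray, i.e. d(z(m), z(n)) = |m − n| for all m, n ∈ ℕ. Then for all vertices x, y ∈ V there exists an integer b ∈ ℤ with |b| ≤ d(x, y) such that the sequence of integers d(x, z(k)) − d(y, z(k)) is eventually equal to b, i.e. there is N with d(x, z(k)) − d(y, z(k)) = b for all k ≥ N. (This limit is the Busemann kernel B_ξ(x, y) of the boundary point ξ represented by the ray z.) -/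
/-!
Fix a vertex `x`. Along the ray, `k ↦ d(x, z k) - k` is antitone, because consecutive points
of the ray are at distance one, and bounded below by `-d(x, z 0)`, because `d(z 0, z k) = k`.
Being integer-valued, it is eventually constant. The Busemann difference
`d(x, z k) - d(y, z k)` is the difference of two such sequences, and its limit is bounded by
`d(x, y)` through the triangle inequality.
-/

open Filter

theorem Int.exists_eventually_eq_of_antitone {f : ℕ → ℤ} (hf : Antitone f)
    (hbdd : BddBelow (Set.range f)) : ∃ c, ∀ᶠ k in atTop, f k = c := by
  obtain ⟨b, hb⟩ := hbdd
  obtain ⟨c, ⟨N, rfl⟩, hmin⟩ := Int.exists_least_of_bdd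
    (P := (· ∈ Set.range f)) ⟨b, fun _ => (hb ·)⟩ ⟨f 0, 0, rfl⟩
  exact ⟨f N, eventually_atTop.2 ⟨N, fun k hk => le_antisymm (hf hk) (hmin _ ⟨k, rfl⟩)⟩⟩

namespace SimpleGraph

variable {V : Type*} {G : SimpleGraph V}

theorem Connected.abs_dist_sub_dist_le (hG : G.Connected) (x y w : V) :
    |(G.dist x w : ℤ) - G.dist y w| ≤ G.dist x y := by
  have hx : G.dist x w ≤ G.dist x y + G.dist y w := hG.dist_triangle
  have hy : G.dist y w ≤ G.dist y x + G.dist x w := hG.dist_triangle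
  have hyx : G.dist y x = G.dist x y := dist_comm
  rw [abs_le]
  constructor <;> omega

theorem Connected.antitone_dist_sub (hG : G.Connected) {z : ℕ → V}
    (hz : ∀ n, G.dist (z n) (z (n + 1)) ≤ 1) (x : V) :
    Antitone fun k => (G.dist x (z k) : ℤ) - k := by
  refine antitone_nat_of_succ_le fun n => ?_
  have h : G.dist x (z (n + 1)) ≤ G.dist x (z n) + G.dist (z n) (z (n + 1)) := hG.dist_triangle
  have := hz n
  push_cast
  omega

theorem Connected.neg_dist_le_dist_sub (hG : G.Connected) {z : ℕ → V}
    (hz : ∀ k, k ≤ G.dist (z 0) (z k)) (x : V) (k : ℕ) :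
    -(G.dist x (z 0) : ℤ) ≤ G.dist x (z k) - k := by
  have h : G.dist (z 0) (z k) ≤ G.dist (z 0) x + G.dist x (z k) := hG.dist_triangle
  have h0x : G.dist (z 0) x = G.dist x (z 0) := dist_comm
  have := hz k
  omega

theorem Connected.exists_eventually_dist_sub_eq (hG : G.Connected) {z : ℕ → V}
    (hgeo : ∀ m n : ℕ, (G.dist (z m) (z n) : ℤ) = |(m : ℤ) - (n : ℤ)|) (x : V) :
    ∃ c : ℤ, ∀ᶠ k in atTop, (G.dist x (z k) : ℤ) - k = c := by
  have hstep (n : ℕ) : G.dist (z n) (z (n + 1)) ≤ 1 := by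
    have := hgeo n (n + 1)
    rw [show ((n : ℤ) - (n + 1 : ℕ)) = -1 by push_cast; ring, abs_neg, abs_one] at this
    omega
  have hfar (k : ℕ) : k ≤ G.dist (z 0) (z k) := by
    have := hgeo 0 k
    rw [Nat.cast_zero, zero_sub, abs_neg, Nat.abs_cast] at this
    omega
  refine Int.exists_eventually_eq_of_antitone (hG.antitone_dist_sub hstep x) ?_
  exact ⟨_, Set.forall_mem_range.2 (hG.neg_dist_le_dist_sub hfar x)⟩

end SimpleGraph

theorem stmt_11 {V : Type*} (T : SimpleGraph V) (htree : T.IsTree)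
    (z : ℕ → V)
    (hgeo : ∀ m n : ℕ, (T.dist (z m) (z n) : ℤ) = |(m : ℤ) - (n : ℤ)|) :
    ∀ x y : V, ∃ b : ℤ, |b| ≤ (T.dist x y : ℤ) ∧
      ∃ N : ℕ, ∀ k ≥ N, (T.dist x (z k) : ℤ) - (T.dist y (z k) : ℤ) = b := by
  intro x y
  have hT : T.Connected := htree.connected
  obtain ⟨a, ha⟩ := hT.exists_eventually_dist_sub_eq hgeo x
  obtain ⟨c, hc⟩ := hT.exists_eventually_dist_sub_eq hgeo y
  obtain ⟨N, hN⟩ := eventually_atTop.1 (ha.and hc)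
  have hdiff (k : ℕ) (hk : k ≥ N) : (T.dist x (z k) : ℤ) - T.dist y (z k) = a - c := by
    obtain ⟨hxk, hyk⟩ := hN k hk
    omega
  refine ⟨a - c, ?_, N, hdiff⟩
  rw [← hdiff N le_rfl]
  exact hT.abs_dist_sub_dist_le x y (z N)
end

section
/- Let T be a tree (a connected acyclic simple graph) on a vertex set V with graph distance d, let x, y ∈ V be adjacent vertices, and let z : ℕ → V be a geodesic ray, i.e. d(z(m), z(n)) = |m − n| for all m, n ∈ ℕ. Then either there exists N such that d(x, z(k)) − d(y, z(k)) = 1 for all k ≥ N, or there exists N such that d(x, z(k)) − d(y, z(k)) = −1 for all k ≥ N. In other words, the Busemann kernel of any boundary point takes only the values 1 and −1 on a pair of adjacent vertices. -/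
open SimpleGraph

/-- In a tree, every path has length equal to the distance between its endpoints. -/
lemma path_length_eq_dist {V : Type*} {T : SimpleGraph V} (htree : T.IsTree)
    {u v : V} (p : T.Walk u v) (hp : p.IsPath) : p.length = T.dist u v := by
  obtain ⟨q, hq⟩ := (htree.isConnected u v).exists_walk_length_eq_dist
  have hqp : q.IsPath := q.isPath_of_length_eq_dist hq
  have := htree.IsAcyclic.path_unique ⟨p, hp⟩ ⟨q, hqp⟩
  have : p = q := congrArg Subtype.val this
  rw [this, hq]

/-- In a tree, distances to adjacent vertices differ by exactly one. -/
lemma adj_dist_cases {V : Type*} {T : SimpleGraph V} (htree : T.IsTree)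
    {x y : V} (hadj : T.Adj x y) (v : V) :
    T.dist x v = T.dist y v + 1 ∨ T.dist y v = T.dist x v + 1 := by
  classical
  obtain ⟨p, hp⟩ := (htree.isConnected x v).exists_walk_length_eq_dist
  have hpp : p.IsPath := p.isPath_of_length_eq_dist hp
  by_cases hy : y ∈ p.support
  · left
    have hsplit := p.take_spec hy
    have h1 : (p.takeUntil y hy).length = T.dist x y :=
      path_length_eq_dist htree _ (hpp.takeUntil hy)
    have h2 : (p.dropUntil y hy).length = T.dist y v :=
      path_length_eq_dist htree _ (hpp.dropUntil hy)
    have hxy : T.dist x y = 1 := dist_eq_one_iff_adj.mpr hadj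
    have hlen : (p.takeUntil y hy).length + (p.dropUntil y hy).length = p.length := by
      conv_rhs => rw [← hsplit]
      rw [SimpleGraph.Walk.length_append]
    omega
  · right
    have hcons : (SimpleGraph.Walk.cons hadj.symm p).IsPath := hpp.cons hy
    have := path_length_eq_dist htree _ hcons
    simp only [SimpleGraph.Walk.length_cons] at this
    omega

/-- An antitone integer sequence bounded below is eventually constant. -/
lemma eventually_const {g : ℕ → ℤ} (hstep : ∀ k, g (k + 1) ≤ g k)
    (c : ℤ) (hc : ∀ k, c ≤ g k) : ∃ N, ∀ k ≥ N, g k = g N := by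
  have hanti : Antitone g := antitone_nat_of_succ_le hstep
  obtain ⟨lb, ⟨N, hN⟩, hleast⟩ := Int.exists_least_of_bdd
    (P := fun z => ∃ n, g n = z) ⟨c, fun z ⟨n, hn⟩ => hn ▸ hc n⟩ ⟨g 0, 0, rfl⟩
  refine ⟨N, fun k hk => ?_⟩
  have h1 : g k ≤ g N := hanti hk
  have h2 : lb ≤ g k := hleast _ ⟨k, rfl⟩
  omega

theorem stmt_13 {V : Type*} (T : SimpleGraph V) (htree : T.IsTree)
    (x y : V) (hadj : T.Adj x y)
    (z : ℕ → V)
    (hgeo : ∀ m n : ℕ, (T.dist (z m) (z n) : ℤ) = |(m : ℤ) - (n : ℤ)|) :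
    (∃ N : ℕ, ∀ k ≥ N, (T.dist x (z k) : ℤ) - (T.dist y (z k) : ℤ) = 1) ∨
    (∃ N : ℕ, ∀ k ≥ N, (T.dist x (z k) : ℤ) - (T.dist y (z k) : ℤ) = -1) := by
  have hconn := htree.isConnected
  have hstepz : ∀ k : ℕ, (T.dist (z k) (z (k + 1)) : ℤ) = 1 := by
    intro k
    rw [hgeo k (k + 1)]
    push_cast
    rw [abs_of_nonpos (by linarith)]
    ring
  -- busemann for a fixed vertex
  have key : ∀ w : V, ∃ N, ∀ k ≥ N,
      (T.dist w (z k) : ℤ) - k = (T.dist w (z N) : ℤ) - N := by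
    intro w
    have hstep : ∀ k : ℕ, ((T.dist w (z (k+1)) : ℤ) - (k+1)) ≤ (T.dist w (z k) : ℤ) - k := by
      intro k
      have htri := hconn.dist_triangle (u := w) (v := z k) (w := z (k+1))
      have : (T.dist w (z (k+1)) : ℤ) ≤ (T.dist w (z k) : ℤ) + (T.dist (z k) (z (k+1)) : ℤ) := by
        exact_mod_cast htri
      rw [hstepz k] at this
      linarith
    have hbdd : ∀ k : ℕ, -(T.dist (z 0) w : ℤ) ≤ (T.dist w (z k) : ℤ) - k := by
      intro k
      have htri := hconn.dist_triangle (u := z 0) (v := w) (w := z k)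
      have h1 : (T.dist (z 0) (z k) : ℤ) ≤ (T.dist (z 0) w : ℤ) + (T.dist w (z k) : ℤ) := by
        exact_mod_cast htri
      have h2 : (T.dist (z 0) (z k) : ℤ) = k := by
        rw [hgeo 0 k]; simp [abs_of_nonpos]
      linarith
    obtain ⟨N, hN⟩ := eventually_const hstep _ hbdd
    exact ⟨N, hN⟩
  obtain ⟨N1, h1⟩ := key x
  obtain ⟨N2, h2⟩ := key y
  set N := max N1 N2 with hNdef
  have hD : ∀ k ≥ N, (T.dist x (z k) : ℤ) - (T.dist y (z k) : ℤ)
      = (T.dist x (z N) : ℤ) - (T.dist y (z N) : ℤ) := by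
    intro k hk
    have e1 := h1 k (le_trans (le_max_left _ _) hk)
    have e2 := h2 k (le_trans (le_max_right _ _) hk)
    have e1' := h1 N (le_max_left _ _)
    have e2' := h2 N (le_max_right _ _)
    linarith
  rcases adj_dist_cases htree hadj (z N) with h | h
  · left
    refine ⟨N, fun k hk => ?_⟩
    rw [hD k hk]
    have : (T.dist x (z N) : ℤ) = (T.dist y (z N) : ℤ) + 1 := by exact_mod_cast h
    linarith
  · right
    refine ⟨N, fun k hk => ?_⟩
    rw [hD k hk]
    have : (T.dist y (z N) : ℤ) = (T.dist x (z N) : ℤ) + 1 := by exact_mod_cast h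
    linarith
end

section
/- Let q ≥ 2 be an integer and let T be a locally finite tree on a vertex set V that is regular of degree q+1. Then the automorphism group of T acts transitively on ordered pairs of adjacent vertices: for any adjacent vertices x₀, x₁ ∈ V and any adjacent vertices y₀, y₁ ∈ V, there exists a graph automorphism f of T with f(x₀) = y₀ and f(x₁) = y₁. -/
/-!
Root both trees, at `x₀` and at `y₀`, and build the isomorphism one sphere at a time. The sphere
of radius `n + 1` is the disjoint union, over the vertices `a` of the sphere of radius `n`, of the
children of `a` (its neighbours one step further from the root), and in a `(q + 1)`-regular tree
the root has `q + 1` children while every other vertex has `q`. So a bijection between the spheres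
of radius `n` extends to radius `n + 1` by choosing, for each `a`, a bijection from the children
of `a` onto the children of its image; at the root it can be chosen to send `x₁` to `y₁`. The
resulting bijection preserves adjacency in both directions because every edge of a tree joins a
vertex to one of its children.
-/

lemma Equiv.exists_apply_eq_of_mem {α β : Type*} {s : Set α} {t : Set β} (e : s ≃ t)
    (a : α) (b : β) : ∃ e' : s ≃ t, ∀ (ha : a ∈ s) (hb : b ∈ t), e' ⟨a, ha⟩ = ⟨b, hb⟩ := by
  classical
  by_cases h : a ∈ s ∧ b ∈ t
  · exact ⟨e.trans (Equiv.swap (e ⟨a, h.1⟩) ⟨b, h.2⟩), fun _ _ => Equiv.swap_apply_left _ _⟩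
  · exact ⟨e, fun ha hb => (h ⟨ha, hb⟩).elim⟩

namespace SimpleGraph

variable {V : Type*} {G : SimpleGraph V} {r u u' v : V}

lemma Connected.exists_adj_dist_eq_add_one (hG : G.Connected) (hv : v ≠ r) :
    ∃ u, G.Adj u v ∧ G.dist r v = G.dist r u + 1 := by
  obtain ⟨p, hp⟩ := (hG r v).exists_walk_length_eq_dist
  have hnil : ¬p.Nil := fun h => hv (h.eq).symm
  refine ⟨p.penultimate, p.adj_penultimate hnil, ?_⟩
  have hle : G.dist r p.penultimate ≤ p.dropLast.length := dist_le _
  have hge := (p.adj_penultimate hnil).diff_dist_adj (u := r)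
  have := p.length_dropLast_add_one hnil
  omega

lemma IsTree.eq_of_adj_of_dist_eq_add_one (hG : G.IsTree) (hu : G.Adj u v) (hu' : G.Adj u' v)
    (h : G.dist r v = G.dist r u + 1) (h' : G.dist r v = G.dist r u' + 1) : u = u' := by
  obtain ⟨p, -, hp⟩ := (hG.connected r u).exists_path_of_dist
  obtain ⟨p', -, hp'⟩ := (hG.connected r u').exists_path_of_dist
  have hpath : (p.concat hu).IsPath :=
    Walk.isPath_of_length_eq_dist _ (by rw [Walk.length_concat, hp, h])
  have hpath' : (p'.concat hu').IsPath :=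
    Walk.isPath_of_length_eq_dist _ (by rw [Walk.length_concat, hp', h'])
  have := (hG.isAcyclic.subsingleton_path r v).elim ⟨_, hpath⟩ ⟨_, hpath'⟩
  exact (Walk.concat_inj (congrArg Subtype.val this)).1

variable (G) in
def children (r a : V) : Set V := {u | G.Adj a u ∧ G.dist r u = G.dist r a + 1}

instance [G.LocallyFinite] (r a : V) : Finite (G.children r a) :=
  Finite.Set.subset (G.neighborSet a) fun _ hu => hu.1

section Regular

variable [G.LocallyFinite] {d : ℕ}

lemma IsRegularOfDegree.ncard_neighborSet (hd : G.IsRegularOfDegree d) (a : V) :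
    (G.neighborSet a).ncard = d := by
  rw [Set.ncard_eq_toFinset_card', Set.toFinset_card, card_neighborSet_eq_degree, hd a]

lemma IsRegularOfDegree.card_children_self (hd : G.IsRegularOfDegree d) (r : V) :
    Nat.card (G.children r r) = d := by
  have : G.children r r = G.neighborSet r := by
    ext u
    simp [children, dist_eq_one_iff_adj]
  rw [Nat.card_coe_set_eq, this, hd.ncard_neighborSet]

lemma IsTree.card_children_of_ne (hG : G.IsTree) (hd : G.IsRegularOfDegree d) {a : V}
    (har : a ≠ r) : Nat.card (G.children r a) = d - 1 := by
  obtain ⟨p, hpa, hp⟩ := hG.connected.exists_adj_dist_eq_add_one har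
  have : G.children r a = G.neighborSet a \ {p} := by
    ext u
    simp only [children, Set.mem_ofPred_eq, Set.mem_sdiff, mem_neighborSet, Set.mem_singleton_iff]
    constructor
    · rintro ⟨hau, hu⟩
      exact ⟨hau, by rintro rfl; omega⟩
    · rintro ⟨hau, hup⟩
      refine ⟨hau, (hG.dist_eq_dist_add_one_of_adj r hau).resolve_left fun hu => hup ?_⟩
      exact hG.eq_of_adj_of_dist_eq_add_one hau.symm hpa hu hp
  have hpN : p ∈ G.neighborSet a := hpa.symm
  rw [Nat.card_coe_set_eq, this, Set.ncard_sdiff_singleton_of_mem hpN, hd.ncard_neighborSet]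

end Regular

noncomputable section

def IsTree.sigmaChildrenEquiv (hG : G.IsTree) (r : V) (n : ℕ) :
    (Σ a : {v // G.dist r v = n}, G.children r a) ≃ {v // G.dist r v = n + 1} :=
  Equiv.ofBijective (fun p => ⟨p.2, by rw [p.2.2.2, p.1.2]⟩) <| by
    constructor
    · rintro ⟨⟨a, ha⟩, ⟨u, hau, hu⟩⟩ ⟨⟨b, hb⟩, ⟨u', hbu, hu'⟩⟩ h
      obtain rfl : u = u' := congrArg Subtype.val h
      exact Sigma.subtype_ext (Subtype.ext (hG.eq_of_adj_of_dist_eq_add_one hau hbu hu hu')) rfl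
    · rintro ⟨v, hv⟩
      obtain ⟨a, hav, ha⟩ := hG.connected.exists_adj_dist_eq_add_one (r := r) (v := v)
        (by rintro rfl; simp at hv)
      exact ⟨⟨⟨a, by omega⟩, ⟨v, hav, ha⟩⟩, rfl⟩

section RegularTreeIso

variable {W : Type*} {H : SimpleGraph W} [G.LocallyFinite] [H.LocallyFinite] {d : ℕ}

lemma IsTree.card_children_eq (hG : G.IsTree) (hH : H.IsTree) (hGd : G.IsRegularOfDegree d)
    (hHd : H.IsRegularOfDegree d) {s : W} {a : V} {b : W} (h : G.dist r a = H.dist s b) :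
    Nat.card (G.children r a) = Nat.card (H.children s b) := by
  have hiff : a = r ↔ b = s := by
    rw [eq_comm, ← hG.connected.dist_eq_zero_iff, h, hH.connected.dist_eq_zero_iff, eq_comm]
  by_cases har : a = r
  · rw [har, hiff.1 har, hGd.card_children_self, hHd.card_children_self]
  · have hbs : b ≠ s := hiff.not.1 har
    rw [hG.card_children_of_ne hGd har, hH.card_children_of_ne hHd hbs]

lemma IsTree.exists_childrenEquiv (hG : G.IsTree) (hH : H.IsTree) (hGd : G.IsRegularOfDegree d)
    (hHd : H.IsRegularOfDegree d) {s : W} {a : V} {b : W} (h : G.dist r a = H.dist s b)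
    (x : V) (y : W) : ∃ e : G.children r a ≃ H.children s b,
      ∀ (hx : x ∈ G.children r a) (hy : y ∈ H.children s b), e ⟨x, hx⟩ = ⟨y, hy⟩ :=
  (Classical.choice <| Finite.card_eq.1 <| hG.card_children_eq hH hGd hHd h)
    |>.exists_apply_eq_of_mem x y

variable (hG : G.IsTree) (hH : H.IsTree) (hGd : G.IsRegularOfDegree d)
  (hHd : H.IsRegularOfDegree d) (x : V) (y : W)

def childrenEquiv {s : W} {n : ℕ} (a : {v // G.dist r v = n}) (b : {w // H.dist s w = n}) :
    G.children r a ≃ H.children s b :=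
  Classical.choose <| hG.exists_childrenEquiv hH hGd hHd (a.2.trans b.2.symm) x y

lemma childrenEquiv_apply_of_mem {r : V} {s : W} {n : ℕ} {a : {v // G.dist r v = n}}
    {b : {w // H.dist s w = n}} (hx : x ∈ G.children r a) (hy : y ∈ H.children s b) :
    childrenEquiv hG hH hGd hHd x y a b ⟨x, hx⟩ = ⟨y, hy⟩ :=
  Classical.choose_spec (hG.exists_childrenEquiv hH hGd hHd (a.2.trans b.2.symm) x y) hx hy

variable (r : V) (s : W)

def levelEquiv : ∀ n : ℕ, {v // G.dist r v = n} ≃ {w // H.dist s w = n}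
  | 0 =>
    { toFun := fun _ => ⟨s, dist_self⟩
      invFun := fun _ => ⟨r, dist_self⟩
      left_inv := fun v => Subtype.ext (hG.connected.dist_eq_zero_iff.1 v.2)
      right_inv := fun w => Subtype.ext (hH.connected.dist_eq_zero_iff.1 w.2) }
  | n + 1 => (hG.sigmaChildrenEquiv r n).symm.trans <|
      (Equiv.sigmaCongr (levelEquiv n) fun a =>
        childrenEquiv hG hH hGd hHd x y a (levelEquiv n a)).trans (hH.sigmaChildrenEquiv s n)

def regularTreeEquiv : V ≃ W :=
  (Equiv.sigmaFiberEquiv (G.dist r)).symm.trans <|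
    (Equiv.sigmaCongrRight (levelEquiv hG hH hGd hHd x y r s)).trans
      (Equiv.sigmaFiberEquiv (H.dist s))

local notation "φ" => regularTreeEquiv hG hH hGd hHd x y r s

lemma regularTreeEquiv_apply {v : V} {n : ℕ} (h : G.dist r v = n) :
    φ v = levelEquiv hG hH hGd hHd x y r s n ⟨v, h⟩ := by
  subst h; rfl

lemma dist_regularTreeEquiv (v : V) : H.dist s (φ v) = G.dist r v := by
  rw [regularTreeEquiv_apply hG hH hGd hHd x y r s rfl]
  exact (levelEquiv hG hH hGd hHd x y r s _ _).2

lemma regularTreeEquiv_self : φ r = s :=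
  regularTreeEquiv_apply hG hH hGd hHd x y r s dist_self

lemma regularTreeEquiv_eq_childrenEquiv {a u : V} (hu : u ∈ G.children r a) :
    φ u = childrenEquiv hG hH hGd hHd x y ⟨a, rfl⟩
      (levelEquiv hG hH hGd hHd x y r s _ ⟨a, rfl⟩) ⟨u, hu⟩ := by
  rw [regularTreeEquiv_apply hG hH hGd hHd x y r s hu.2,
    show (⟨u, hu.2⟩ : {v // G.dist r v = _}) = hG.sigmaChildrenEquiv r _ ⟨⟨a, rfl⟩, ⟨u, hu⟩⟩
      from rfl]
  simp only [levelEquiv, Equiv.trans_apply, Equiv.symm_apply_apply]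
  rfl

lemma regularTreeEquiv_mem_children {a u : V} (hu : u ∈ G.children r a) :
    φ u ∈ H.children s (φ a) := by
  rw [regularTreeEquiv_eq_childrenEquiv hG hH hGd hHd x y r s hu,
    regularTreeEquiv_apply hG hH hGd hHd x y r s rfl]
  exact Subtype.prop _

lemma regularTreeEquiv_apply_of_adj (hx : G.Adj r x) (hy : H.Adj s y) : φ x = y := by
  have hxr : x ∈ G.children r r := ⟨hx, by rw [dist_self, dist_eq_one_iff_adj.2 hx]⟩
  have hys : y ∈ H.children s s := ⟨hy, by rw [dist_self, dist_eq_one_iff_adj.2 hy]⟩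
  have hroot : (levelEquiv hG hH hGd hHd x y r s _ ⟨r, rfl⟩ : W) = s :=
    (regularTreeEquiv_apply hG hH hGd hHd x y r s rfl).symm.trans
      (regularTreeEquiv_self hG hH hGd hHd x y r s)
  have hys' : y ∈ H.children s (levelEquiv hG hH hGd hHd x y r s _ ⟨r, rfl⟩) := by
    rw [hroot]
    exact hys
  rw [regularTreeEquiv_eq_childrenEquiv hG hH hGd hHd x y r s hxr,
    childrenEquiv_apply_of_mem hG hH hGd hHd x y hxr hys']

lemma adj_regularTreeEquiv_of_adj {u v : V} (h : G.Adj u v) : H.Adj (φ u) (φ v) := by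
  rcases hG.dist_eq_dist_add_one_of_adj r h with huv | hvu
  · exact (regularTreeEquiv_mem_children hG hH hGd hHd x y r s ⟨h.symm, huv⟩).1.symm
  · exact (regularTreeEquiv_mem_children hG hH hGd hHd x y r s ⟨h, hvu⟩).1

lemma adj_of_adj_regularTreeEquiv {u v : V} (h : H.Adj (φ u) (φ v)) : G.Adj u v := by
  suffices key : ∀ {u v : V}, H.Adj (φ u) (φ v) → H.dist s (φ v) = H.dist s (φ u) + 1 →
      G.Adj u v by
    rcases hH.dist_eq_dist_add_one_of_adj s h with hvu | huv
    · exact (key h.symm hvu).symm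
    · exact key h huv
  intro u v h huv
  have hvr : v ≠ r := by
    rintro rfl
    simp only [dist_regularTreeEquiv, dist_self] at huv
    omega
  obtain ⟨p, hpv, hp⟩ := hG.connected.exists_adj_dist_eq_add_one hvr
  have hφ := regularTreeEquiv_mem_children hG hH hGd hHd x y r s ⟨hpv, hp⟩
  obtain rfl := (φ).injective (hH.eq_of_adj_of_dist_eq_add_one hφ.1 h hφ.2 huv)
  exact hpv

def regularTreeIso : G ≃g H where
  toEquiv := φ
  map_rel_iff' := ⟨adj_of_adj_regularTreeEquiv hG hH hGd hHd x y r s,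
    adj_regularTreeEquiv_of_adj hG hH hGd hHd x y r s⟩

end RegularTreeIso

end

end SimpleGraph

theorem stmt_16_general (q : ℕ)
    {V : Type*} (T : SimpleGraph V) (htree : T.IsTree)
    [T.LocallyFinite] (hreg : T.IsRegularOfDegree (q + 1)) :
    ∀ x₀ x₁ y₀ y₁ : V, T.Adj x₀ x₁ → T.Adj y₀ y₁ →
      ∃ f : T ≃g T, f x₀ = y₀ ∧ f x₁ = y₁ := by
  intro x₀ x₁ y₀ y₁ hx hy
  exact ⟨SimpleGraph.regularTreeIso htree htree hreg hreg x₁ y₁ x₀ y₀,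
    SimpleGraph.regularTreeEquiv_self htree htree hreg hreg x₁ y₁ x₀ y₀,
    SimpleGraph.regularTreeEquiv_apply_of_adj htree htree hreg hreg x₁ y₁ x₀ y₀ hx hy⟩

theorem stmt_16 (q : ℕ) (hq : 2 ≤ q)
    {V : Type*} (T : SimpleGraph V) (htree : T.IsTree)
    [T.LocallyFinite] (hreg : T.IsRegularOfDegree (q + 1)) :
    ∀ x₀ x₁ y₀ y₁ : V, T.Adj x₀ x₁ → T.Adj y₀ y₁ →
      ∃ f : T ≃g T, f x₀ = y₀ ∧ f x₁ = y₁ :=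
  stmt_16_general q T htree hreg
end
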